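/- arXiv:1303.5670 — 2 statements merged into one kernel-verified Lean document; each statement's English description precedes it below -/
import Mathlib

section
/- Suppose M ∈ ℝ₊^{p×q} is such that both M and Mᵀ are slack matrices of polytopes. Then there exists a polytope P with 0 in its interior such that M is a slack matrix of P and Mᵀ is a slack matrix of the polar polytope P° = {y : xᵀy ≤ 1 for all x ∈ P}. -/
open Matrix Set

/-- The cone generated by the rows of the matrix `A`, i.e. the set of all
nonnegative linear combinations of the rows of `A`. -/
def coneOfRows {p n : ℕ} (A : Matrix (Fin p) (Fin n) ℝ) : Set (Fin n → ℝ) :=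
  {x | ∃ y : Fin p → ℝ, 0 ≤ y ∧ x = Matrix.vecMul y A}

/-- `M` is the slack matrix of the polyhedral cone `K` with respect to the
representation `(A, B)`: `K = {x | xᵀB ≥ 0} = cone(rows A)` and `M = A * B`. -/
def IsSlackMatrixOfConeRep {p q n : ℕ} (M : Matrix (Fin p) (Fin q) ℝ)
    (K : Set (Fin n → ℝ)) (A : Matrix (Fin p) (Fin n) ℝ)
    (B : Matrix (Fin n) (Fin q) ℝ) : Prop :=
  K = {x | 0 ≤ Matrix.vecMul x B} ∧ K = coneOfRows A ∧ M = A * B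

/-- `M` is a slack matrix of some polyhedral cone. -/
def IsSlackMatrixOfCone {p q : ℕ} (M : Matrix (Fin p) (Fin q) ℝ) : Prop :=
  ∃ (n : ℕ) (A : Matrix (Fin p) (Fin n) ℝ) (B : Matrix (Fin n) (Fin q) ℝ),
    {x : Fin n → ℝ | 0 ≤ Matrix.vecMul x B} = coneOfRows A ∧ M = A * B

/-- The row cone generating condition: the cone generated by the rows of `M`
equals the intersection of the row span of `M` with the nonnegative orthant. -/
def RCGC {p q : ℕ} (M : Matrix (Fin p) (Fin q) ℝ) : Prop :=
  {z : Fin q → ℝ | ∃ y : Fin p → ℝ, 0 ≤ y ∧ z = Matrix.vecMul y M} =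
    {z : Fin q → ℝ | (∃ y : Fin p → ℝ, z = Matrix.vecMul y M) ∧ 0 ≤ z}

/-- The column cone generating condition: the cone generated by the columns of `M`
equals the intersection of the column span of `M` with the nonnegative orthant. -/
def CCGC {p q : ℕ} (M : Matrix (Fin p) (Fin q) ℝ) : Prop :=
  {z : Fin p → ℝ | ∃ c : Fin q → ℝ, 0 ≤ c ∧ z = M.mulVec c} =
    {z : Fin p → ℝ | (∃ c : Fin q → ℝ, z = M.mulVec c) ∧ 0 ≤ z}

/-- The convex hull of the rows of `V`. -/
def rowsConv {p n : ℕ} (V : Matrix (Fin p) (Fin n) ℝ) : Set (Fin n → ℝ) :=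
  convexHull ℝ (Set.range fun i => V i)

/-- `S` is a slack matrix of the polytope `P ⊆ ℝⁿ` (of dimension at least one):
there are `V`, `W`, `w` with `P = conv(rows V) = {x | Wx ≤ w}` and
`S i j = w j - ⟨row j of W, row i of V⟩`. -/
def IsSlackMatrixOfPolytopeOn {p q n : ℕ} (S : Matrix (Fin p) (Fin q) ℝ)
    (P : Set (Fin n → ℝ)) : Prop :=
  ∃ (V : Matrix (Fin p) (Fin n) ℝ) (W : Matrix (Fin q) (Fin n) ℝ) (w : Fin q → ℝ),
    P = rowsConv V ∧ P = {x | W.mulVec x ≤ w} ∧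
    (∃ u ∈ P, ∃ v ∈ P, u ≠ v) ∧
    (∀ i j, S i j = w j - ∑ k, W j k * V i k)

/-- `S` is a slack matrix of some polytope (of dimension at least one). -/
def IsSlackMatrixOfPolytope {p q : ℕ} (S : Matrix (Fin p) (Fin q) ℝ) : Prop :=
  ∃ (n : ℕ) (P : Set (Fin n → ℝ)), IsSlackMatrixOfPolytopeOn S P

/-- A cone is pointed if its lineality space is trivial, i.e. it contains no
nonzero `x` together with `-x`. -/
def IsPointedCone {n : ℕ} (K : Set (Fin n → ℝ)) : Prop :=
  ∀ x ∈ K, -x ∈ K → x = 0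

/-- The dimension of a cone: the dimension of its linear hull. -/
noncomputable def coneDim {n : ℕ} (K : Set (Fin n → ℝ)) : ℕ :=
  Module.finrank ℝ (Submodule.span ℝ K)

/-- The (affine) dimension of a set: the dimension of its affine hull. -/
noncomputable def affDim {n : ℕ} (P : Set (Fin n → ℝ)) : ℕ :=
  Module.finrank ℝ (affineSpan ℝ P).direction

/-- The 0/1 incidence pattern of a matrix: `(inc M) i j = 1` iff `M i j = 0`. -/
noncomputable def inc {p q : ℕ} (M : Matrix (Fin p) (Fin q) ℝ) : Matrix (Fin p) (Fin q) ℝ :=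
  Matrix.of fun i j => if M i j = 0 then 1 else 0

/-- `M'` is obtained from `M` by adding zero rows (keeping the order of the
original rows). -/
def AddZeroRows {p p' q : ℕ} (M : Matrix (Fin p) (Fin q) ℝ)
    (M' : Matrix (Fin p') (Fin q) ℝ) : Prop :=
  ∃ φ : Fin p → Fin p', StrictMono φ ∧ (∀ i, M' (φ i) = M i) ∧
    ∀ i', i' ∉ Set.range φ → M' i' = 0

/-- The polar of a set `P`. -/
def polarSet {n : ℕ} (P : Set (Fin n → ℝ)) : Set (Fin n → ℝ) :=
  {y | ∀ x ∈ P, ∑ i, x i * y i ≤ 1}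

section AuxiliaryLemmas

/-- Ray lemma: a bounded set cannot contain a full ray unless direction is 0. -/
lemma aux_ray_zero {n : ℕ} {C : Set (Fin n → ℝ)} (hC : Bornology.IsBounded C)
    {x d : Fin n → ℝ} (h : ∀ t : ℝ, 0 ≤ t → x + t • d ∈ C) : d = 0 := by
  by_contra hd
  have hdn : 0 < ‖d‖ := norm_pos_iff.2 hd
  obtain ⟨R, hR⟩ := isBounded_iff_forall_norm_le.1 hC
  have hx0 : ‖x‖ ≤ R := by simpa using hR _ (h 0 le_rfl)
  have hxnn : (0:ℝ) ≤ ‖x‖ := norm_nonneg _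
  have hRnn : (0:ℝ) ≤ R := le_trans hxnn hx0
  set t : ℝ := (R + ‖x‖ + 1) / ‖d‖ with ht
  have htpos : 0 ≤ t := by positivity
  have hmem := hR _ (h t htpos)
  have h1 : ‖t • d‖ ≤ ‖x + t • d‖ + ‖x‖ := by
    have h0 : t • d = (x + t • d) - x := by abel
    calc ‖t • d‖ = ‖(x + t • d) - x‖ := by rw [← h0]
    _ ≤ ‖x + t • d‖ + ‖x‖ := norm_sub_le _ _
  have h2 : ‖t • d‖ = R + ‖x‖ + 1 := by
    rw [norm_smul, Real.norm_eq_abs, abs_of_nonneg htpos, ht,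
      div_mul_cancel₀ _ (ne_of_gt hdn)]
  linarith

/-- every linear functional on `Fin n → ℝ` is given by a dot product. -/
lemma aux_dot_rep {n : ℕ} (g : (Fin n → ℝ) →ₗ[ℝ] ℝ) (v : Fin n → ℝ) :
    g v = ∑ j, v j * g (Pi.single j 1) := by
  have hv : v = ∑ j, v j • (Pi.single j (1:ℝ) : Fin n → ℝ) := by
    funext l
    simp [Finset.sum_apply, Pi.single_apply, mul_ite, Finset.sum_ite_eq]
  conv_lhs => rw [hv]
  rw [map_sum]
  simp [smul_eq_mul]

/-- the all-ones covector is in the row span of M, given the orthogonality cond. -/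
lemma aux_exists_combo {p q : ℕ} (M : Matrix (Fin p) (Fin q) ℝ)
    (h : ∀ z : Fin q → ℝ, (∀ i, ∑ j, M i j * z j = 0) → ∑ j, z j = 0) :
    ∃ θ : Fin p → ℝ, ∀ j, ∑ i, θ i * M i j = 1 := by
  classical
  set r : Fin p → (Fin q → ℝ) := fun i j => M i j with hr
  set K := Submodule.span ℝ (Set.range r) with hK
  by_cases hone : (fun _ => (1:ℝ)) ∈ K
  · obtain ⟨θ, hθ⟩ := (Submodule.mem_span_range_iff_exists_fun ℝ).1 hone
    refine ⟨θ, fun j => ?_⟩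
    have := congrFun hθ j
    simpa [Finset.sum_apply, hr, smul_eq_mul] using this
  · exfalso
    have hmk : (Submodule.Quotient.mk (fun _ => (1:ℝ)) : _ ⧸ K) ≠ 0 := by
      simpa [Submodule.Quotient.mk_eq_zero] using hone
    have := (Module.forall_dual_apply_eq_zero_iff ℝ
      (Submodule.Quotient.mk (fun _ => (1:ℝ)) : _ ⧸ K)).not.2 hmk
    push_neg at this
    obtain ⟨φ, hφ⟩ := this
    set g : (Fin q → ℝ) →ₗ[ℝ] ℝ := φ.comp K.mkQ with hg
    set z : Fin q → ℝ := fun j => g (Pi.single j 1) with hz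
    have hgv : ∀ v, g v = ∑ j, v j * z j := fun v => aux_dot_rep g v
    have hzz : ∀ i, ∑ j, M i j * z j = 0 := by
      intro i
      have hri : r i ∈ K := Submodule.subset_span ⟨i, rfl⟩
      have : g (r i) = 0 := by
        simp [hg, Submodule.mkQ_apply, (Submodule.Quotient.mk_eq_zero K).2 hri]
      rw [hgv] at this
      simpa [hr] using this
    have hsum := h z hzz
    have : g (fun _ => 1) = 0 := by
      rw [hgv]; simpa using hsum
    exact hφ (by simpa [hg] using this)

lemma aux_sum_swap {n p : ℕ} (a : Fin n → ℝ) (θ : Fin p → ℝ) (F : Fin p → Fin n → ℝ) :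
    ∑ k, a k * (∑ i, θ i * F i k) = ∑ i, θ i * (∑ k, a k * F i k) := by
  calc ∑ k, a k * ∑ i, θ i * F i k = ∑ k, ∑ i, a k * (θ i * F i k) :=
        Finset.sum_congr rfl fun k _ => Finset.mul_sum _ _ _
  _ = ∑ i, ∑ k, a k * (θ i * F i k) := Finset.sum_comm
  _ = ∑ i, θ i * ∑ k, a k * F i k := Finset.sum_congr rfl fun i _ => by
        rw [Finset.mul_sum]; exact Finset.sum_congr rfl fun k _ => by ring

lemma aux_sum_affine {n : ℕ} (a u d : Fin n → ℝ) (t : ℝ) :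
    ∑ k, a k * (u k + t * d k) = ∑ k, a k * u k + t * ∑ k, a k * d k := by
  rw [Finset.mul_sum, ← Finset.sum_add_distrib]
  exact Finset.sum_congr rfl fun k _ => by ring

lemma aux_sum_sub {n : ℕ} (a u v : Fin n → ℝ) :
    ∑ k, a k * (u k - v k) = ∑ k, a k * u k - ∑ k, a k * v k := by
  rw [← Finset.sum_sub_distrib]
  exact Finset.sum_congr rfl fun k _ => by ring

lemma aux_sum_mul_left {n : ℕ} (a g : Fin n → ℝ) (s : ℝ) :
    ∑ k, a k * (s * g k) = s * ∑ k, a k * g k := by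
  rw [Finset.mul_sum]
  exact Finset.sum_congr rfl fun k _ => by ring

lemma aux_isLinear {n : ℕ} (a : Fin n → ℝ) :
    IsLinearMap ℝ (fun x : Fin n → ℝ => ∑ k, a k * x k) := by
  constructor
  · intro x y
    rw [← Finset.sum_add_distrib]
    exact Finset.sum_congr rfl fun k _ => by simp [mul_add]
  · intro s x
    rw [smul_eq_mul, Finset.mul_sum]
    exact Finset.sum_congr rfl fun k _ => by simp [smul_eq_mul]; ring

lemma aux_convex_le {n : ℕ} (a : Fin n → ℝ) (r : ℝ) :
    Convex ℝ {x : Fin n → ℝ | ∑ k, a k * x k ≤ r} :=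
  convex_halfSpace_le (aux_isLinear a) r

lemma aux_convex_le' {n : ℕ} (a : Fin n → ℝ) (r : ℝ) :
    Convex ℝ {x : Fin n → ℝ | ∑ k, x k * a k ≤ r} := by
  have : {x : Fin n → ℝ | ∑ k, x k * a k ≤ r} = {x : Fin n → ℝ | ∑ k, a k * x k ≤ r} := by
    ext x; simp [mul_comm]
  rw [this]; exact aux_convex_le a r

lemma aux_convex_ge {n : ℕ} (a : Fin n → ℝ) (r : ℝ) :
    Convex ℝ {x : Fin n → ℝ | r ≤ ∑ k, a k * x k} :=
  convex_halfSpace_ge (aux_isLinear a) r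

lemma aux_single_sum {n : ℕ} (x : Fin n → ℝ) (j : Fin n) (ε : ℝ) :
    ∑ k, x k * (Pi.single j ε : Fin n → ℝ) k = x j * ε := by
  simp [Pi.single_apply, mul_ite, Finset.sum_ite_eq]

end AuxiliaryLemmas

set_option maxHeartbeats 2000000

/-- **Proposition.** If both `M` and `Mᵀ` are slack matrices of polytopes, then
there exists a polytope `P` with `0` in its interior such that `M` is a slack
matrix of `P` and `Mᵀ` is a slack matrix of the polar polytope `P°`. -/
theorem slack_matrix_and_transpose_polar {p q : ℕ} (M : Matrix (Fin p) (Fin q) ℝ)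
    (h1 : IsSlackMatrixOfPolytope M) (h2 : IsSlackMatrixOfPolytope Mᵀ) :
    ∃ (n : ℕ) (P : Set (Fin n → ℝ)), 0 ∈ interior P ∧
      IsSlackMatrixOfPolytopeOn M P ∧ IsSlackMatrixOfPolytopeOn Mᵀ (polarSet P) := by
  classical
  obtain ⟨n₁, P₁, V, W, w, hV, hW, ⟨u₀, hu₀, v₀, hv₀, huv⟩, hS⟩ := h1
  obtain ⟨n₂, Q, V₂, W₂, w₂, hV₂, hW₂, ⟨u₂, hu₂, _v₂, _hv₂, _huv₂⟩, hS₂⟩ := h2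
  -- nonemptiness of index types
  have hq : Nonempty (Fin q) := by
    by_contra h
    rw [not_nonempty_iff] at h
    rw [hV₂] at hu₂
    simp [rowsConv, Set.range_eq_empty] at hu₂
  have hn : Nonempty (Fin n₁) := by
    by_contra h
    rw [not_nonempty_iff] at h
    exact huv (funext fun k => isEmptyElim k)
  obtain ⟨j₀⟩ := hn
  have hqpos : 0 < q := by
    obtain ⟨j⟩ := hq; exact j.pos
  -- nonnegativity of M
  have hM0 : ∀ i j, 0 ≤ M i j := by
    intro i j
    have hVi : V i ∈ P₁ := by
      rw [hV]; exact subset_convexHull ℝ _ ⟨i, rfl⟩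
    rw [hW] at hVi
    have h3 : ∑ k, W j k * V i k ≤ w j := by
      have := hVi j
      simpa [Matrix.mulVec, dotProduct] using this
    rw [hS i j]; linarith
  -- boundedness
  have hbd₁ : Bornology.IsBounded P₁ := by
    rw [hV]; exact ((Set.finite_range _).isCompact_convexHull ℝ).isBounded
  have hbd₂ : Bornology.IsBounded Q := by
    rw [hV₂]; exact ((Set.finite_range _).isCompact_convexHull ℝ).isBounded
  -- M is not identically zero
  have hMne : ¬ (∀ i j, M i j = 0) := by
    intro hall
    have hup : ∀ x ∈ P₁, ∀ j, ∑ k, W j k * x k = w j := by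
      intro x hx j
      have hle : ∑ k, W j k * x k ≤ w j := by
        rw [hW] at hx
        simpa [Matrix.mulVec, dotProduct] using hx j
      have hge : w j ≤ ∑ k, W j k * x k := by
        have hsub : P₁ ⊆ {y : Fin n₁ → ℝ | w j ≤ ∑ k, W j k * y k} := by
          rw [hV]
          apply convexHull_min _ (aux_convex_ge _ _)
          rintro y ⟨i, rfl⟩
          have := hS i j
          rw [hall i j] at this
          simp only [Set.mem_setOf_eq]
          linarith
        exact hsub hx
      linarith
    have hray : ∀ t : ℝ, 0 ≤ t → u₀ + t • (u₀ - v₀) ∈ P₁ := by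
      intro t ht
      rw [hW]
      intro j
      have e : ∑ k, W j k * (u₀ k + t * (u₀ k - v₀ k)) = w j := by
        rw [aux_sum_affine, aux_sum_sub, hup u₀ hu₀ j, hup v₀ hv₀ j]
        ring
      simpa [Matrix.mulVec, dotProduct] using le_of_eq e
    have := aux_ray_zero hbd₁ hray
    exact huv (by rwa [sub_eq_zero] at this)
  -- existence of θ with θᵀ M = 1
  obtain ⟨θ, hθ⟩ : ∃ θ : Fin p → ℝ, ∀ j, ∑ i, θ i * M i j = 1 := by
    apply aux_exists_combo
    intro z hz
    by_contra hτ
    set τ := ∑ j, z j with hτdef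
    set yb : Fin n₂ → ℝ := fun k => ∑ j, (q:ℝ)⁻¹ * V₂ j k with hyb
    have hybQ : yb ∈ Q := by
      rw [hV₂]
      have hmem := (convex_convexHull ℝ (Set.range fun j => V₂ j)).sum_mem
        (t := Finset.univ) (w := fun _ : Fin q => (q:ℝ)⁻¹) (z := fun j => V₂ j)
        (fun _ _ => by positivity)
        (by
          rw [Finset.sum_const, Finset.card_univ, Fintype.card_fin, nsmul_eq_mul]
          exact mul_inv_cancel₀ (by exact_mod_cast hqpos.ne'))
        (fun j _ => subset_convexHull ℝ _ ⟨j, rfl⟩)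
      unfold rowsConv
      convert hmem using 1
      funext k
      simp [hyb, Finset.sum_apply]
    set b : Fin p → ℝ := fun i => w₂ i - ∑ k, W₂ i k * yb k with hbdef
    have hbnn : ∀ i, 0 ≤ b i := by
      intro i
      rw [hW₂] at hybQ
      have := hybQ i
      simp only [hbdef]
      have h4 : ∑ k, W₂ i k * yb k ≤ w₂ i := by
        simpa [Matrix.mulVec, dotProduct] using this
      linarith
    set ν : Fin n₂ → ℝ := fun k => τ⁻¹ * (∑ j, z j * (V₂ j k - yb k)) with hν
    have hWν : ∀ i, ∑ k, W₂ i k * ν k = b i := by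
      intro i
      have e1 : ∀ j, ∑ k, W₂ i k * (V₂ j k - yb k) = b i - M i j := by
        intro j
        rw [aux_sum_sub]
        have := hS₂ j i
        rw [Matrix.transpose_apply] at this
        simp only [hbdef]
        linarith
      calc ∑ k, W₂ i k * ν k
          = τ⁻¹ * ∑ k, W₂ i k * (∑ j, z j * (V₂ j k - yb k)) := aux_sum_mul_left _ _ _
        _ = τ⁻¹ * ∑ j, z j * (∑ k, W₂ i k * (V₂ j k - yb k)) := by rw [aux_sum_swap]
        _ = τ⁻¹ * ∑ j, z j * (b i - M i j) := by
            congr 1; exact Finset.sum_congr rfl fun j _ => by rw [e1 j]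
        _ = τ⁻¹ * (τ * b i - ∑ j, M i j * z j) := by
            congr 1
            rw [hτdef, Finset.sum_mul, ← Finset.sum_sub_distrib]
            exact Finset.sum_congr rfl fun j _ => by ring
        _ = b i := by rw [hz i, sub_zero]; field_simp
    have hrayQ : ∀ t : ℝ, 0 ≤ t → yb + t • (fun k => -ν k) ∈ Q := by
      intro t ht
      rw [hW₂]
      intro i
      have e : ∑ k, W₂ i k * (yb k + t * (-ν k)) ≤ w₂ i := by
        have e2 : ∑ k, W₂ i k * (-ν k) = -b i := by
          have : ∑ k, W₂ i k * (-ν k) = -∑ k, W₂ i k * ν k := by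
            rw [← Finset.sum_neg_distrib]
            exact Finset.sum_congr rfl fun k _ => by ring
          rw [this, hWν i]
        rw [aux_sum_affine, e2]
        have := hbnn i
        have h5 : 0 ≤ t * b i := mul_nonneg ht this
        simp only [hbdef] at this ⊢
        nlinarith
      simpa [Matrix.mulVec, dotProduct] using e
    have hν0 : (fun k => -ν k) = 0 := aux_ray_zero hbd₂ hrayQ
    have hν0' : ∀ k, ν k = 0 := by
      intro k
      have := congrFun hν0 k
      simpa [neg_eq_zero] using this
    have hb0 : ∀ i, b i = 0 := by
      intro i
      rw [← hWν i]
      apply Finset.sum_eq_zero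
      intro k _
      rw [hν0' k, mul_zero]
    have hMrow : ∀ i j, M i j = 0 := by
      intro i
      have hsum : ∑ j, M i j = 0 := by
        have e3 : ∑ j, M i j = (q:ℝ) * b i := by
          have e4 : ∀ j, M i j = w₂ i - ∑ k, W₂ i k * V₂ j k := by
            intro j
            have := hS₂ j i
            rwa [Matrix.transpose_apply] at this
          calc ∑ j, M i j = ∑ j, (w₂ i - ∑ k, W₂ i k * V₂ j k) :=
                Finset.sum_congr rfl fun j _ => e4 j
            _ = (q:ℝ) * w₂ i - ∑ j, ∑ k, W₂ i k * V₂ j k := by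
                rw [Finset.sum_sub_distrib, Finset.sum_const, Finset.card_univ,
                  Fintype.card_fin, nsmul_eq_mul]
            _ = (q:ℝ) * w₂ i - ∑ k, W₂ i k * ((q:ℝ) * yb k) := by
                congr 1
                rw [Finset.sum_comm]
                apply Finset.sum_congr rfl
                intro k _
                rw [← Finset.mul_sum]
                simp only [hyb]
                rw [← Finset.mul_sum, Finset.mul_sum]
                congr 1
                rw [← Finset.mul_sum]
                field_simp
            _ = (q:ℝ) * b i := by
                simp only [hbdef]
                rw [mul_sub]
                congr 1
                rw [Finset.mul_sum]
                exact Finset.sum_congr rfl fun k _ => by ring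
        rw [e3, hb0 i, mul_zero]
      intro j
      exact (Finset.sum_eq_zero_iff_of_nonneg (fun j _ => hM0 i j)).1 hsum j (Finset.mem_univ j)
    exact hMne hMrow
  -- the normalizing data
  set σ : ℝ := ∑ i, θ i with hσdef
  set a : Fin q → ℝ := fun j => w j - ∑ k, W j k * u₀ k with hadef
  have ha0 : ∀ j, 0 ≤ a j := by
    intro j
    rw [hW] at hu₀
    have := hu₀ j
    simp only [hadef]
    have h6 : ∑ k, W j k * u₀ k ≤ w j := by
      simpa [Matrix.mulVec, dotProduct] using this
    linarith
  set ξ : Fin n₁ → ℝ := fun k => ∑ i, θ i * (V i k - u₀ k) with hξdef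
  have hWξ : ∀ j, ∑ k, W j k * ξ k = σ * a j - 1 := by
    intro j
    have e0 : ∀ i, ∑ k, W j k * (V i k - u₀ k) = a j - M i j := by
      intro i
      rw [aux_sum_sub]
      have := hS i j
      simp only [hadef]
      linarith
    calc ∑ k, W j k * ξ k
        = ∑ i, θ i * (∑ k, W j k * (V i k - u₀ k)) := aux_sum_swap _ _ _
      _ = ∑ i, θ i * (a j - M i j) := Finset.sum_congr rfl fun i _ => by rw [e0 i]
      _ = σ * a j - 1 := by
          rw [← hθ j, hσdef, Finset.sum_mul, ← Finset.sum_sub_distrib]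
          exact Finset.sum_congr rfl fun i _ => by ring
  have hσpos : 0 < σ := by
    by_contra hσ
    push_neg at hσ
    have hray : ∀ t : ℝ, 0 ≤ t → u₀ + t • ξ ∈ P₁ := by
      intro t ht
      rw [hW]
      intro j
      have e : ∑ k, W j k * (u₀ k + t * ξ k) ≤ w j := by
        rw [aux_sum_affine, hWξ j]
        have h7 : σ * a j ≤ 0 := mul_nonpos_of_nonpos_of_nonneg hσ (ha0 j)
        have h8 : t * (σ * a j - 1) ≤ 0 := mul_nonpos_of_nonneg_of_nonpos ht (by linarith)
        have h9 : ∑ k, W j k * u₀ k = w j - a j := by simp only [hadef]; ring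
        rw [h9]; linarith [ha0 j]
      simpa [Matrix.mulVec, dotProduct] using e
    have hξ0 := aux_ray_zero hbd₁ hray
    obtain ⟨j⟩ := hq
    have := hWξ j
    rw [hξ0] at this
    simp only [Pi.zero_apply, mul_zero, Finset.sum_const_zero] at this
    have h7 : σ * a j ≤ 0 := mul_nonpos_of_nonpos_of_nonneg hσ (ha0 j)
    linarith
  set c : ℝ := σ⁻¹ with hcdef
  have hc : 0 < c := inv_pos.2 hσpos
  have hcσ : c * σ = 1 := inv_mul_cancel₀ (ne_of_gt hσpos)
  set m : Fin n₁ → ℝ := fun k => u₀ k + c * ξ k with hmdef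
  have hkey : ∀ j, ∑ k, W j k * m k = w j - c := by
    intro j
    have e : ∑ k, W j k * m k = ∑ k, W j k * u₀ k + c * (σ * a j - 1) := by
      simp only [hmdef]
      rw [aux_sum_affine, hWξ j]
    rw [e]
    have h9 : ∑ k, W j k * u₀ k = w j - a j := by simp only [hadef]; ring
    rw [h9]
    linear_combination a j * hcσ
  -- the polytope P and related matrices
  set X : Matrix (Fin p) (Fin n₁) ℝ := Matrix.of fun i k => V i k - m k with hXdef
  set Y : Matrix (Fin q) (Fin n₁) ℝ := Matrix.of fun j k => W j k / c with hYdef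
  set P : Set (Fin n₁ → ℝ) := {x | ∀ j, ∑ k, W j k * x k ≤ c} with hPdef
  have hMX : ∀ i j, M i j = c - ∑ k, W j k * X i k := by
    intro i j
    have e : ∑ k, W j k * X i k = ∑ k, W j k * V i k - ∑ k, W j k * m k := by
      simp only [hXdef, Matrix.of_apply]
      exact aux_sum_sub _ _ _
    rw [e, hkey j]
    have := hS i j
    linarith
  have hXP : ∀ i, X i ∈ P := by
    intro i j
    have := hMX i j
    have := hM0 i j
    linarith
  -- P = rowsConv X
  have hPconv : P = rowsConv X := by
    have hT : ∃ T : (Fin n₁ → ℝ) →ᵃ[ℝ] (Fin n₁ → ℝ), ∀ y, T y = y - m :=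
      ⟨⟨fun y => y - m, LinearMap.id, fun pt v => by
        simp [vadd_eq_add]; abel⟩, fun y => rfl⟩
    obtain ⟨T, hTy⟩ := hT
    have hrange : (Set.range fun i => X i) = T '' (Set.range fun i => V i) := by
      ext y
      constructor
      · rintro ⟨i, rfl⟩
        exact ⟨V i, ⟨i, rfl⟩, by rw [hTy]; funext k; simp [hXdef]⟩
      · rintro ⟨x, ⟨i, rfl⟩, rfl⟩
        exact ⟨i, by rw [hTy]; funext k; simp [hXdef]⟩
    have himg : rowsConv X = T '' P₁ := by
      rw [rowsConv, hrange, ← AffineMap.image_convexHull, hV, rowsConv]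
    rw [himg]
    ext x
    constructor
    · intro hx
      refine ⟨x + m, ?_, by rw [hTy]; abel⟩
      rw [hW]
      intro j
      have hxj := hx j
      have e : ∑ k, W j k * (x k + m k) = ∑ k, W j k * x k + (w j - c) := by
        have h10 := aux_sum_affine (fun k => W j k) x m 1
        simp only [one_mul] at h10
        rw [h10, hkey j]
      have : ∑ k, W j k * (x k + m k) ≤ w j := by rw [e]; linarith
      simpa [Matrix.mulVec, dotProduct] using this
    · rintro ⟨y, hy, rfl⟩
      rw [hTy]
      intro j
      rw [hW] at hy
      have hyj : ∑ k, W j k * y k ≤ w j := by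
        simpa [Matrix.mulVec, dotProduct] using hy j
      have e : ∑ k, W j k * (y - m) k = ∑ k, W j k * y k - (w j - c) := by
        have e2 : ∑ k, W j k * (y - m) k = ∑ k, W j k * (y k - m k) :=
          Finset.sum_congr rfl fun k _ => rfl
        rw [e2, aux_sum_sub, hkey j]
      rw [e]; linarith
  -- 0 in the interior of P
  have h0int : (0 : Fin n₁ → ℝ) ∈ interior P := by
    have hO : IsOpen {x : Fin n₁ → ℝ | ∀ j, ∑ k, W j k * x k < c} := by
      have e : {x : Fin n₁ → ℝ | ∀ j, ∑ k, W j k * x k < c}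
          = ⋂ j, {x : Fin n₁ → ℝ | ∑ k, W j k * x k < c} := by
        ext x; simp [Set.mem_iInter]
      rw [e]
      exact isOpen_iInter_of_finite fun j =>
        isOpen_lt (continuous_finset_sum _ fun k _ =>
          (continuous_const.mul (continuous_apply k))) continuous_const
    have hsub : {x : Fin n₁ → ℝ | ∀ j, ∑ k, W j k * x k < c} ⊆ P :=
      fun x hx j => le_of_lt (hx j)
    have h0mem : (0 : Fin n₁ → ℝ) ∈ {x : Fin n₁ → ℝ | ∀ j, ∑ k, W j k * x k < c} := by
      intro j
      simp only [Set.mem_setOf_eq, Pi.zero_apply, mul_zero, Finset.sum_const_zero]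
      exact hc
    exact interior_maximal hsub hO h0mem
  have h0P : (0 : Fin n₁ → ℝ) ∈ P := interior_subset h0int
  have hbP : Bornology.IsBounded P := by
    rw [hPconv]; exact ((Set.finite_range _).isCompact_convexHull ℝ).isBounded
  -- polar of P as halfspace intersection
  have hpol1 : polarSet P = {y : Fin n₁ → ℝ | ∀ i, ∑ k, X i k * y k ≤ 1} := by
    ext y
    constructor
    · intro hy i
      exact hy (X i) (hXP i)
    · intro hy x hx
      rw [hPconv] at hx
      have hsub : rowsConv X ⊆ {x : Fin n₁ → ℝ | ∑ k, x k * y k ≤ 1} := by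
        apply convexHull_min _ (aux_convex_le' _ _)
        rintro _ ⟨i, rfl⟩
        have := hy i
        simp only [Set.mem_setOf_eq]
        exact this
      exact hsub hx
  -- polarSet P = rowsConv Y
  have hYpol : ∀ j, Y j ∈ polarSet P := by
    intro j x hx
    have hxj : ∑ k, W j k * x k ≤ c := hx j
    have e : ∑ k, x k * Y j k = (∑ k, W j k * x k) / c := by
      rw [Finset.sum_div]
      exact Finset.sum_congr rfl fun k _ => by
        simp only [hYdef, Matrix.of_apply]; ring
    rw [e]
    exact div_le_one_of_le₀ hxj (le_of_lt hc)
  have hpolconv : Convex ℝ (polarSet P) := by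
    have e : polarSet P = ⋂ x ∈ P, {y : Fin n₁ → ℝ | ∑ k, x k * y k ≤ 1} := by
      ext y; simp [polarSet, Set.mem_iInter]
    rw [e]
    exact convex_iInter₂ fun x _ => aux_convex_le _ _
  have hpol2 : polarSet P = rowsConv Y := by
    apply Set.Subset.antisymm
    · intro z hz
      by_contra hznot
      have hDconv : Convex ℝ (rowsConv Y) := convex_convexHull ℝ _
      have hDcl : IsClosed (rowsConv Y) :=
        ((Set.finite_range _).isCompact_convexHull ℝ).isClosed
      obtain ⟨f, s, hfD, hfz⟩ := geometric_hahn_banach_closed_point hDconv hDcl hznot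
      set α : Fin n₁ → ℝ := fun k => f (Pi.single k 1) with hα
      have hf : ∀ v, f v = ∑ k, v k * α k := fun v => aux_dot_rep (f : (Fin n₁ → ℝ) →ₗ[ℝ] ℝ) v
      have hfY : ∀ j, ∑ k, Y j k * α k < s := by
        intro j
        have := hfD (Y j) (subset_convexHull ℝ _ ⟨j, rfl⟩)
        rwa [hf] at this
      rcases le_or_gt s 0 with hs | hs
      · -- unbounded ray contradiction
        have hray : ∀ t : ℝ, 0 ≤ t → (0 : Fin n₁ → ℝ) + t • α ∈ P := by
          intro t ht j
          have hWα : ∑ k, W j k * α k < 0 := by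
            have h11 : ∑ k, W j k * α k = c * ∑ k, Y j k * α k := by
              rw [Finset.mul_sum]
              exact Finset.sum_congr rfl fun k _ => by
                simp only [hYdef, Matrix.of_apply]
                field_simp
            rw [h11]
            have := hfY j
            nlinarith
          have e : ∑ k, W j k * ((0 : Fin n₁ → ℝ) + t • α) k = t * ∑ k, W j k * α k := by
            rw [← aux_sum_mul_left]
            exact Finset.sum_congr rfl fun k _ => by simp
          rw [e]
          nlinarith
        have hα0 := aux_ray_zero hbP hray
        obtain ⟨j⟩ := hq
        have h12 := hfY j
        rw [hα0] at h12
        simp only [Pi.zero_apply, mul_zero, Finset.sum_const_zero] at h12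
        linarith
      · -- scale to get point of P violating polarity
        set bvec : Fin n₁ → ℝ := fun k => α k / s with hbv
        have hbP' : bvec ∈ P := by
          intro j
          have e : ∑ k, W j k * bvec k = (∑ k, W j k * α k) / s := by
            rw [Finset.sum_div]
            exact Finset.sum_congr rfl fun k _ => by
              simp only [hbv]; ring
          have h11 : ∑ k, W j k * α k = c * ∑ k, Y j k * α k := by
            rw [Finset.mul_sum]
            exact Finset.sum_congr rfl fun k _ => by
              simp only [hYdef, Matrix.of_apply]
              field_simp
          rw [e, h11]
          rw [div_le_iff₀ hs]
          have := hfY j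
          nlinarith
        have hzb := hz bvec hbP'
        have hfz' : s < ∑ k, z k * α k := by rw [← hf]; exact hfz
        have e : ∑ k, bvec k * z k = (∑ k, z k * α k) / s := by
          rw [Finset.sum_div]
          exact Finset.sum_congr rfl fun k _ => by simp only [hbv]; ring
        rw [e] at hzb
        have : (1:ℝ) < (∑ k, z k * α k) / s := by
          rw [lt_div_iff₀ hs]; linarith
        linarith
    · exact convexHull_min (by rintro _ ⟨j, rfl⟩; exact hYpol j) hpolconv
  -- assemble everything
  refine ⟨n₁, P, h0int, ?_, ?_⟩
  · -- M is a slack matrix of P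
    refine ⟨X, W, (fun _ => c), hPconv, ?_, ?_, fun i j => by rw [hMX i j]⟩
    · ext x
      constructor
      · intro hx j
        simpa [Matrix.mulVec, dotProduct] using hx j
      · intro hx j
        have := hx j
        simpa [Matrix.mulVec, dotProduct] using this
    · -- two distinct points in P
      obtain ⟨ε, hε, hball⟩ := Metric.mem_nhds_iff.1 (mem_interior_iff_mem_nhds.1 h0int)
      refine ⟨0, h0P, Pi.single j₀ (ε/2), ?_, ?_⟩
      · apply hball
        rw [Metric.mem_ball, dist_zero_right]
        rw [pi_norm_lt_iff hε]
        intro k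
        rw [Real.norm_eq_abs]
        by_cases hk : k = j₀
        · subst hk
          rw [Pi.single_eq_same, abs_of_nonneg (by linarith)]
          linarith
        · rw [Pi.single_eq_of_ne hk]
          simpa using hε
      · intro h0
        have := congrFun h0 j₀
        simp only [Pi.single_eq_same, Pi.zero_apply] at this
        linarith
  · -- Mᵀ is a slack matrix of polarSet P
    refine ⟨Y, Matrix.of (fun i k => c * X i k), (fun _ => c), hpol2, ?_, ?_, ?_⟩
    · rw [hpol1]
      ext y
      constructor
      · intro hy i
        have := hy i
        have e : ∑ k, c * X i k * y k = c * ∑ k, X i k * y k := by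
          rw [Finset.mul_sum]
          exact Finset.sum_congr rfl fun k _ => by ring
        simp only [Matrix.mulVec, dotProduct, Matrix.of_apply]
        calc ∑ k, c * X i k * y k = c * ∑ k, X i k * y k := e
          _ ≤ c * 1 := by
              exact mul_le_mul_of_nonneg_left this (le_of_lt hc)
          _ = c := mul_one c
      · intro hy i
        have := hy i
        have h13 : ∑ k, c * X i k * y k ≤ c := by
          simpa [Matrix.mulVec, dotProduct] using this
        have e : ∑ k, c * X i k * y k = c * ∑ k, X i k * y k := by
          rw [Finset.mul_sum]
          exact Finset.sum_congr rfl fun k _ => by ring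
        rw [e] at h13
        nlinarith
    · -- two distinct points in polarSet P
      obtain ⟨R, hR⟩ := isBounded_iff_forall_norm_le.1 hbP
      have hR0 : 0 ≤ R := le_trans (norm_nonneg _) (hR 0 h0P)
      have hRpos : 0 < R + 1 := by linarith
      refine ⟨0, ?_, Pi.single j₀ ((R+1)⁻¹), ?_, ?_⟩
      · intro x hx
        simp
      · intro x hx
        rw [aux_single_sum]
        have h14 : |x j₀| ≤ R := by
          have := norm_le_pi_norm x j₀
          have h15 := hR x hx
          rw [Real.norm_eq_abs] at this
          linarith
        calc x j₀ * (R+1)⁻¹ ≤ |x j₀| * (R+1)⁻¹ := by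
              apply mul_le_mul_of_nonneg_right (le_abs_self _)
              positivity
          _ ≤ R * (R+1)⁻¹ := by
              apply mul_le_mul_of_nonneg_right h14
              positivity
          _ ≤ 1 := by
              rw [← div_eq_mul_inv]
              exact div_le_one_of_le₀ (by linarith) (by linarith)
      · intro h0
        have h16 := congrFun h0 j₀
        rw [Pi.zero_apply, Pi.single_eq_same] at h16
        have h17 : (0:ℝ) < (R+1)⁻¹ := by positivity
        linarith
    · -- slack formula for the transpose
      intro i j
      rw [Matrix.transpose_apply, hMX j i]
      have e : ∑ k, (Matrix.of (fun i k => c * X i k)) j k * Y i k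
          = ∑ k, W i k * X j k := by
        apply Finset.sum_congr rfl
        intro k _
        simp only [Matrix.of_apply, hYdef]
        calc c * X j k * (W i k / c) = (c / c) * (X j k * W i k) := by ring
          _ = W i k * X j k := by rw [div_self (ne_of_gt hc)]; ring
      rw [e]
end

section
/- Every slack matrix S of a polytope P of dimension ≥ 1 has the all-ones vector 𝟙 in its column span, i.e., 𝟙 ∈ S·ℝ^q. Equivalently, if P = conv(rows(V)) = {x : Wx ≤ w} has dimension ≥ 1, then the vector (1, 0, …, 0) ∈ ℝ^{1+n} lies in the row space of the matrix [w, −W] (the span of the vectors (w_j, −W_j)). -/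
open Matrix Set

/-- **(All-ones vector in the column span.)** Every slack matrix `S` of a
polytope `P = conv(rows V) = {x | Wx ≤ w}` of dimension at least one has the
all-ones vector in its column span, `𝟙 ∈ S·ℝ^q`; equivalently, the vector
`(1, 0, …, 0)` lies in the span of the vectors `(w j, -(row j of W))`. -/
theorem ones_mem_column_span_of_slack_matrix {p q n : ℕ}
    (V : Matrix (Fin p) (Fin n) ℝ) (W : Matrix (Fin q) (Fin n) ℝ) (w : Fin q → ℝ)
    (S : Matrix (Fin p) (Fin q) ℝ)
    (hrep : rowsConv V = {x | W.mulVec x ≤ w})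
    (hdim : ∃ u ∈ rowsConv V, ∃ v ∈ rowsConv V, u ≠ v)
    (hS : ∀ i j, S i j = w j - ∑ k, W j k * V i k) :
    (∃ c : Fin q → ℝ, S.mulVec c = 1) ∧
      (Fin.cons (1 : ℝ) (0 : Fin n → ℝ)) ∈
        Submodule.span ℝ
          (Set.range fun j => Fin.cons (w j) (fun k => -(W j k)) : Set (Fin (n + 1) → ℝ)) := by
  obtain ⟨u, hu, v, hv, huv⟩ := hdim
  have hspan : (Fin.cons (1 : ℝ) (0 : Fin n → ℝ)) ∈
      Submodule.span ℝ
        (Set.range fun j => Fin.cons (w j) (fun k => -(W j k)) : Set (Fin (n + 1) → ℝ)) := by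
    by_contra hx
    obtain ⟨φ, hφne, hφbot⟩ :=
      Submodule.exists_dual_map_eq_bot_of_notMem hx inferInstance
    have hgen : ∀ j, φ (Fin.cons (w j) (fun k => -(W j k))) = 0 := by
      intro j
      have hmem : (Fin.cons (w j) (fun k => -(W j k)) : Fin (n+1) → ℝ) ∈
          Submodule.span ℝ
            (Set.range fun j => Fin.cons (w j) (fun k => -(W j k)) : Set (Fin (n + 1) → ℝ)) :=
        Submodule.subset_span ⟨j, rfl⟩
      have : φ (Fin.cons (w j) (fun k => -(W j k))) ∈
          (Submodule.span ℝ
            (Set.range fun j => Fin.cons (w j) (fun k => -(W j k)) : Set (Fin (n + 1) → ℝ))).map φ :=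
        Submodule.mem_map_of_mem hmem
      rw [hφbot] at this
      simpa using this
    set e : Fin (n+1) → (Fin (n+1) → ℝ) := fun i j => if i = j then 1 else 0 with he
    set α : ℝ := φ (e 0) with hα
    set z : Fin n → ℝ := fun k => φ (e k.succ) with hz
    have hexp : ∀ x : Fin (n+1) → ℝ, φ x = x 0 * α + ∑ k : Fin n, x k.succ * z k := by
      intro x
      rw [LinearMap.pi_apply_eq_sum_univ φ x, Fin.sum_univ_succ]
      simp [hα, hz, he, smul_eq_mul]
    have hαne : α ≠ 0 := by
      have h1 : φ (Fin.cons (1 : ℝ) (0 : Fin n → ℝ)) = α := by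
        rw [hexp]; simp
      intro h; rw [h] at h1; exact hφne h1
    have hWz : ∀ j, ∑ k, W j k * z k = α * w j := by
      intro j
      have h := hgen j
      rw [hexp] at h
      simp only [Fin.cons_zero, Fin.cons_succ] at h
      have h2 : ∑ x : Fin n, -W j x * z x = -∑ x : Fin n, W j x * z x := by
        rw [← Finset.sum_neg_distrib]
        exact Finset.sum_congr rfl fun x _ => by ring
      rw [h2] at h
      linarith
    set ζ : Fin n → ℝ := fun k => z k / α with hζ
    have hWζ : W.mulVec ζ = w := by
      funext j
      simp only [Matrix.mulVec, dotProduct, hζ]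
      rw [show ∑ k, W j k * (z k / α) = (∑ k, W j k * z k) / α by
        rw [Finset.sum_div]; exact Finset.sum_congr rfl fun k _ => by ring]
      rw [hWz j]
      field_simp
    have hζP : ζ ∈ rowsConv V := by
      rw [hrep]; exact le_of_eq hWζ
    obtain ⟨a, haP, haζ⟩ : ∃ a ∈ rowsConv V, a ≠ ζ := by
      by_cases h : u = ζ
      · exact ⟨v, hv, fun hc => huv (h ▸ hc ▸ rfl)⟩
      · exact ⟨u, hu, h⟩
    set d : Fin n → ℝ := a - ζ with hd
    have hdne : d ≠ 0 := sub_ne_zero.mpr haζ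
    obtain ⟨k, hk⟩ : ∃ k, d k ≠ 0 := by
      by_contra h
      push_neg at h
      exact hdne (funext h)
    have hray : ∀ s : ℝ, 0 ≤ s → ζ + s • d ∈ rowsConv V := by
      intro s hs
      rw [hrep]
      have hlin : W.mulVec (ζ + s • d) = w + s • (W.mulVec a - w) := by
        rw [Matrix.mulVec_add, Matrix.mulVec_smul, hd, Matrix.mulVec_sub, hWζ]
      intro j
      have haW : W.mulVec a j ≤ w j := (hrep ▸ haP) j
      have : W.mulVec (ζ + s • d) j = w j + s * (W.mulVec a j - w j) := by
        rw [hlin]; simp [smul_eq_mul]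
      rw [this]
      nlinarith [mul_nonneg hs (sub_nonneg.mpr haW)]
    have hpne : Nonempty (Fin p) := by
      rcases Nat.eq_zero_or_pos p with h | h
      · exfalso
        subst h
        have hre : (Set.range fun i : Fin 0 => V i) = ∅ := by
          simp [Set.range_eq_empty]
        rw [rowsConv, hre, convexHull_empty] at hu
        exact hu
      · exact ⟨⟨0, h⟩⟩
    set M : ℝ := Finset.univ.sup' Finset.univ_nonempty (fun i => d k * V i k) with hM
    have hlinmap : IsLinearMap ℝ (fun x : Fin n → ℝ => d k * x k) := by
      constructor
      · intro x y; simp [mul_add]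
      · intro c x; simp [smul_eq_mul]; ring
    have hsub : rowsConv V ⊆ {x : Fin n → ℝ | d k * x k ≤ M} := by
      apply convexHull_min
      · rintro x ⟨i, rfl⟩
        exact Finset.le_sup' (fun i => d k * V i k) (Finset.mem_univ i)
      · exact convex_halfSpace_le hlinmap M
    have hζb : d k * ζ k ≤ M := hsub hζP
    have hsq : (0 : ℝ) < d k ^ 2 := by positivity
    obtain ⟨s, hs0, hsgt⟩ : ∃ s : ℝ, 0 ≤ s ∧ M - d k * ζ k < s * d k ^ 2 := by
      refine ⟨(M - d k * ζ k) / d k ^ 2 + 1, ?_, ?_⟩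
      · have h3 : 0 ≤ (M - d k * ζ k) / d k ^ 2 := div_nonneg (by linarith) hsq.le
        linarith
      · have h4 : (M - d k * ζ k) / d k ^ 2 * d k ^ 2 = M - d k * ζ k := by field_simp
        nlinarith
    have hb : d k * ((ζ + s • d) k) ≤ M := hsub (hray s hs0)
    have hcontra : d k * ((ζ + s • d) k) = d k * ζ k + s * d k ^ 2 := by
      simp only [Pi.add_apply, Pi.smul_apply, smul_eq_mul]
      ring
    rw [hcontra] at hb
    linarith
  refine ⟨?_, hspan⟩
  rw [Submodule.mem_span_range_iff_exists_fun] at hspan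
  obtain ⟨c, hc⟩ := hspan
  have h0 : ∑ j, c j * w j = 1 := by
    have := congrFun hc 0
    simpa [Finset.sum_apply] using this
  have hkz : ∀ k : Fin n, ∑ j, c j * W j k = 0 := by
    intro k
    have hck := congrFun hc k.succ
    simp only [Finset.sum_apply, Pi.smul_apply, Fin.cons_succ, smul_eq_mul,
      Pi.zero_apply] at hck
    have h2 : -∑ j, c j * W j k = 0 := by
      rw [← hck, ← Finset.sum_neg_distrib]
      exact Finset.sum_congr rfl fun j _ => by ring
    linarith
  refine ⟨c, ?_⟩
  funext i
  show ∑ j, S i j * c j = 1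
  calc ∑ j, S i j * c j
      = ∑ j, (c j * w j - ∑ k, c j * W j k * V i k) := by
        refine Finset.sum_congr rfl fun j _ => ?_
        rw [hS, sub_mul, Finset.sum_mul]
        congr 1
        · ring
        · exact Finset.sum_congr rfl fun k _ => by ring
    _ = (∑ j, c j * w j) - ∑ j, ∑ k, c j * W j k * V i k := Finset.sum_sub_distrib _ _
    _ = 1 - ∑ k, (∑ j, c j * W j k) * V i k := by
        rw [h0, Finset.sum_comm]
        congr 1
        exact Finset.sum_congr rfl fun k _ => (Finset.sum_mul _ _ _).symm
    _ = 1 := by simp [hkz]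
end
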